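/- arXiv:2404.11004 — 6 statements merged into one kernel-verified Lean document; each statement's English description precedes it below -/
import Mathlib

section
/- Let n ≥ 1 be an integer and T a trigonometric polynomial of order < n, i.e., T(x) = Σ_{|ℓ|<n} b_ℓ e^{iℓx} with b_ℓ ∈ ℂ. Then the derivative of T satisfies max_{x∈𝕋} |T'(x)| ≤ n · max_{x∈𝕋} |T(x)| (Bernstein inequality). -/
open MeasureTheory ProbabilityTheory

noncomputable section

/-- A low pass filter: an infinitely differentiable even function `H : ℝ → [0,1]`
with `H(t) = 1` for `|t| ≤ 1/2` and `H(t) = 0` for `|t| ≥ 1`. -/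
structure LowPassFilter where
  toFun : ℝ → ℝ
  contDiff : ContDiff ℝ (⊤ : ℕ∞) toFun
  mem_Icc : ∀ t : ℝ, toFun t ∈ Set.Icc (0 : ℝ) 1
  even : ∀ t : ℝ, toFun (-t) = toFun t
  eq_one : ∀ t : ℝ, |t| ≤ 1 / 2 → toFun t = 1
  eq_zero : ∀ t : ℝ, 1 ≤ |t| → toFun t = 0

/-- The integers `ℓ` with `|ℓ| < n`. -/
def lrange (n : ℕ) : Finset ℤ := Finset.Ioo (-(n : ℤ)) (n : ℤ)

/-- The normalizing constant `ħ_n = (Σ_{|ℓ|<n} H(|ℓ|/n))⁻¹`. -/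
def hbar (F : LowPassFilter) (n : ℕ) : ℝ :=
  (∑ ℓ ∈ lrange n, F.toFun (|(ℓ : ℝ)| / n))⁻¹

/-- The localized kernel `Φ_n(x) = ħ_n Σ_{|ℓ|<n} H(|ℓ|/n) e^{iℓx}`, as a function on `ℝ`
(it is `2π`-periodic, hence a function on `𝕋 = ℝ/2πℤ`). -/
def Phi (F : LowPassFilter) (n : ℕ) (x : ℝ) : ℂ :=
  (hbar F n : ℂ) *
    ∑ ℓ ∈ lrange n, (F.toFun (|(ℓ : ℝ)| / n) : ℂ) * Complex.exp (Complex.I * ℓ * x)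

/-- The distance from `x` to `0` modulo `2π`, i.e. the norm of `x` in `𝕋 = ℝ/2πℤ`. -/
def tnorm (x : ℝ) : ℝ := ‖(x : AddCircle (2 * Real.pi))‖

/-- A real-valued random variable `X` is mean-zero sub-Gaussian with parameter `V`
(`X ∈ G(V)`) if `E[X] = 0` and `log E[exp(tX)] ≤ t²V²/2` for all real `t`. -/
def SubGaussianRe {Ω : Type*} [MeasurableSpace Ω] (μ : Measure Ω) (X : Ω → ℝ) (V : ℝ) : Prop :=
  (∫ ω, X ω ∂μ) = 0 ∧
    ∀ t : ℝ, Integrable (fun ω => Real.exp (t * X ω)) μ ∧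
      Real.log (∫ ω, Real.exp (t * X ω) ∂μ) ≤ t ^ 2 * V ^ 2 / 2

/-- A complex-valued random variable is in `G(V)` if both its real and imaginary parts are
mean-zero sub-Gaussian with parameter `V`. -/
def SubGaussianC {Ω : Type*} [MeasurableSpace Ω] (μ : Measure Ω) (X : Ω → ℂ) (V : ℝ) : Prop :=
  SubGaussianRe μ (fun ω => (X ω).re) V ∧ SubGaussianRe μ (fun ω => (X ω).im) V

/-- The exact samples `μ̂(ℓ) = Σ_k A_k e^{-iℓλ_k}`. -/
def muhat {K : ℕ} (A : Fin K → ℂ) (lam : Fin K → ℝ) (ℓ : ℤ) : ℂ :=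
  ∑ k, A k * Complex.exp (-(Complex.I * ℓ * lam k))

/-- The noise term `E_n(x) = ħ_n Σ_{|ℓ|<n} H(|ℓ|/n) ε_ℓ e^{iℓx}`. -/
def En (F : LowPassFilter) (n : ℕ) (eps : ℤ → ℂ) (x : ℝ) : ℂ :=
  (hbar F n : ℂ) *
    ∑ ℓ ∈ lrange n, (F.toFun (|(ℓ : ℝ)| / n) : ℂ) * eps ℓ * Complex.exp (Complex.I * ℓ * x)

/-- The reconstruction `σ_n(x) = ħ_n Σ_{|ℓ|<n} H(|ℓ|/n) (μ̂(ℓ) + ε_ℓ) e^{iℓx}`. -/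
def sigman (F : LowPassFilter) (n : ℕ) {K : ℕ} (A : Fin K → ℂ) (lam : Fin K → ℝ)
    (eps : ℤ → ℂ) (x : ℝ) : ℂ :=
  (hbar F n : ℂ) *
    ∑ ℓ ∈ lrange n, (F.toFun (|(ℓ : ℝ)| / n) : ℂ) * (muhat A lam ℓ + eps ℓ) *
      Complex.exp (Complex.I * ℓ * x)


/-- The thresholded set `𝔾 = {x : |σ_n(x)| ≥ m/2}` (as a set of real representatives). -/
def Gset (F : LowPassFilter) (n : ℕ) {K : ℕ} (A : Fin K → ℂ) (lam : Fin K → ℝ) (eps : ℤ → ℂ)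
    (m : ℝ) : Set ℝ :=
  {x : ℝ | m / 2 ≤ ‖sigman F n A lam eps x‖}

/-- The cluster `𝔾_ℓ = {x ∈ 𝔾 : |x - λ_ℓ| < C/n}` (distance measured modulo `2π`). -/
def Glset (F : LowPassFilter) (n : ℕ) {K : ℕ} (A : Fin K → ℂ) (lam : Fin K → ℝ) (eps : ℤ → ℂ)
    (m C : ℝ) (l : Fin K) : Set ℝ :=
  {x ∈ Gset F n A lam eps m | tnorm (x - lam l) < C / n}

namespace BernAux

def ww (n : ℕ) : ℂ := Complex.exp (Complex.I * (Real.pi / (2 * n)))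

lemma ww_ne_zero (n : ℕ) : ww n ≠ 0 := Complex.exp_ne_zero _

lemma ww_zpow (n : ℕ) (m : ℤ) :
    ww n ^ m = Complex.exp (Complex.I * ((m : ℂ) * Real.pi / (2 * n))) := by
  rw [ww, ← Complex.exp_int_mul]
  congr 1
  ring

lemma ww_zpow_two_n {n : ℕ} (hn : 1 ≤ n) : ww n ^ (2 * (n : ℤ)) = -1 := by
  rw [ww_zpow]
  have hn0 : (n : ℂ) ≠ 0 := Nat.cast_ne_zero.mpr (by omega)
  have : Complex.I * (((2 * (n:ℤ) : ℤ) : ℂ) * (Real.pi : ℂ) / (2 * n)) = Real.pi * Complex.I := by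
    push_cast
    field_simp
  rw [this, Complex.exp_pi_mul_I]

lemma ww_zpow_four_n {n : ℕ} (hn : 1 ≤ n) : ww n ^ (4 * (n : ℤ)) = 1 := by
  have : (4 * (n:ℤ)) = 2 * n + 2 * n := by ring
  rw [this, zpow_add₀ (ww_ne_zero n), ww_zpow_two_n hn]
  ring

lemma ww_sq_ne_one {n : ℕ} (hn : 1 ≤ n) {p : ℤ} (hp : ¬ (2 * (n:ℤ)) ∣ p) :
    ww n ^ (2 * p) ≠ 1 := by
  rw [ww_zpow]
  intro h
  rw [Complex.exp_eq_one_iff] at h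
  obtain ⟨k, hk⟩ := h
  apply hp
  refine ⟨k, ?_⟩
  have hn0 : (n : ℂ) ≠ 0 := Nat.cast_ne_zero.mpr (by omega)
  have hπ : (Real.pi : ℂ) ≠ 0 := Complex.ofReal_ne_zero.mpr Real.pi_ne_zero
  have : (p : ℂ) = 2 * n * k := by
    field_simp at hk
    have h2 : (p:ℂ) * (2 * Real.pi * Complex.I) = (2 * n * k) * (2 * Real.pi * Complex.I) := by
      push_cast at hk
      linear_combination (↑Real.pi * Complex.I) * hk
    exact mul_right_cancel₀ (by simp [hπ, Complex.I_ne_zero]) h2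
  exact_mod_cast this

/-- the exponential sum over the odd nodes. -/
def GG (n : ℕ) (p : ℤ) : ℂ := ∑ k ∈ Finset.range (2 * n), ww n ^ (p * (2 * (k:ℤ) + 1))

lemma GG_zero (n : ℕ) : GG n 0 = 2 * n := by
  simp [GG]

lemma GG_two_n {n : ℕ} (hn : 1 ≤ n) : GG n (2 * n) = -(2 * n : ℂ) := by
  have h : ∀ k ∈ Finset.range (2 * n), ww n ^ ((2 * (n:ℤ)) * (2 * (k:ℤ) + 1)) = -1 := by
    intro k _
    rw [zpow_mul, ww_zpow_two_n hn]
    have : (2 * (k:ℤ) + 1) = ((2 * k + 1 : ℕ) : ℤ) := by push_cast; ring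
    rw [this, zpow_natCast, pow_succ, pow_mul]
    simp
  rw [GG, Finset.sum_congr rfl h]
  simp

lemma GG_not_dvd {n : ℕ} (hn : 1 ≤ n) {p : ℤ} (hp : ¬ (2 * (n:ℤ)) ∣ p) : GG n p = 0 := by
  have h : ∀ k ∈ Finset.range (2 * n), ww n ^ (p * (2 * (k:ℤ) + 1))
      = ww n ^ p * (ww n ^ (2 * p)) ^ k := by
    intro k _
    rw [← zpow_natCast (ww n ^ (2 * p)) k, ← zpow_mul, ← zpow_add₀ (ww_ne_zero n)]
    congr 1
    ring
  rw [GG, Finset.sum_congr rfl h, ← Finset.mul_sum,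
    geom_sum_eq (ww_sq_ne_one hn hp)]
  have : (ww n ^ (2 * p)) ^ (2 * n) = 1 := by
    rw [← zpow_natCast (ww n ^ (2*p)) (2*n), ← zpow_mul]
    have : 2 * p * ((2 * n : ℕ) : ℤ) = (4 * (n:ℤ)) * p := by push_cast; ring
    rw [this, zpow_mul, ww_zpow_four_n hn, one_zpow]
  rw [this]
  simp

lemma dvd_cases {n : ℕ} (hn : 1 ≤ n) {p : ℤ} (hp : (2 * (n:ℤ)) ∣ p)
    (h1 : -(2 * (n:ℤ)) < p) (h2 : p < 4 * n) : p = 0 ∨ p = 2 * n := by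
  obtain ⟨s, rfl⟩ := hp
  have hn' : (1:ℤ) ≤ n := by exact_mod_cast hn
  have hs0 : 0 ≤ s := by nlinarith
  have hs1 : s < 2 := by nlinarith
  interval_cases s
  · left; ring
  · right; ring

lemma sum_ite_int (n : ℕ) (c : ℤ) (v : ℂ) :
    ∑ j ∈ Finset.range n, (if (j:ℤ) = c then v else 0)
      = if 0 ≤ c ∧ c < n then v else 0 := by
  by_cases h : 0 ≤ c ∧ c < n
  · rw [if_pos h]
    have hm : c.toNat ∈ Finset.range n := by
      rw [Finset.mem_range]; omega
    rw [Finset.sum_eq_single_of_mem c.toNat hm]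
    · rw [if_pos (by omega)]
    · intro b _ hb
      rw [if_neg (by omega)]
  · rw [if_neg h]
    apply Finset.sum_eq_zero
    intro j hj
    rw [Finset.mem_range] at hj
    rw [if_neg (by omega)]

lemma count_lt (n : ℕ) (c : ℤ) (v : ℂ) :
    ∑ j ∈ Finset.range n, (if (j:ℤ) < c then v else 0)
      = (min n c.toNat : ℕ) * v := by
  rw [← Finset.sum_filter]
  rw [Finset.sum_const, nsmul_eq_mul]
  congr 2
  have : Finset.filter (fun j : ℕ => (j:ℤ) < c) (Finset.range n) = Finset.range (min n c.toNat) := by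
    ext j
    simp only [Finset.mem_filter, Finset.mem_range, lt_min_iff]
    omega
  rw [this, Finset.card_range]

lemma count_ge (n : ℕ) (c : ℤ) (v : ℂ) (hc : 0 ≤ c) :
    ∑ j ∈ Finset.range n, (if c ≤ (j:ℤ) then v else 0)
      = ((n : ℤ) - c).toNat * v := by
  rw [← Finset.sum_filter, Finset.sum_const, nsmul_eq_mul]
  congr 2
  have : Finset.filter (fun j : ℕ => c ≤ (j:ℤ)) (Finset.range n) = Finset.Ico c.toNat n := by
    ext j
    simp only [Finset.mem_filter, Finset.mem_range, Finset.mem_Ico]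
    omega
  rw [this, Nat.card_Ico]
  omega


lemma GG_eval {n : ℕ} (hn : 1 ≤ n) {ℓ j j' : ℤ} (hℓ1 : -(n:ℤ) < ℓ) (hℓ2 : ℓ < n)
    (hj1 : 0 ≤ j) (hj2 : j < n) (hj'1 : 0 ≤ j') (hj'2 : j' < n) :
    GG n (ℓ + n + j - j')
      = (if j' = j + ℓ + n then (2*n:ℂ) else 0) + (if j' = j + ℓ - n then -(2*n:ℂ) else 0) := by
  set p := ℓ + n + j - j' with hp
  by_cases h0 : p = 0
  · rw [h0, GG_zero, if_pos (by omega), if_neg (by omega)]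
    push_cast; ring
  · by_cases h2 : p = 2 * n
    · rw [h2]
      rw [show ((2:ℤ) * n) = ((2 * (n:ℤ))) from rfl, GG_two_n hn,
        if_neg (by omega), if_pos (by omega)]
      push_cast; ring
    · rw [if_neg (by omega), if_neg (by omega), GG_not_dvd hn, add_zero]
      intro hd
      rcases dvd_cases hn hd (by omega) (by omega) with h | h
      · exact h0 h
      · exact h2 h

/-- The double-sum evaluation. -/
lemma Ssum {n : ℕ} (hn : 1 ≤ n) {ℓ : ℤ} (hℓ1 : -(n:ℤ) < ℓ) (hℓ2 : ℓ < n) :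
    ∑ j ∈ Finset.range n, ∑ j' ∈ Finset.range n, GG n (ℓ + (n:ℤ) + (j:ℤ) - (j':ℤ))
      = -(2 * n * ℓ : ℤ) := by
  have step1 : ∀ j ∈ Finset.range n,
      ∑ j' ∈ Finset.range n, GG n (ℓ + (n:ℤ) + (j:ℤ) - (j':ℤ))
        = (if (j:ℤ) < -ℓ then (2*n:ℂ) else 0) + (if (n:ℤ) - ℓ ≤ (j:ℤ) then -(2*n:ℂ) else 0) := by
    intro j hj
    rw [Finset.mem_range] at hj
    have : ∀ j' ∈ Finset.range n, GG n (ℓ + (n:ℤ) + (j:ℤ) - (j':ℤ))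
        = (if (j':ℤ) = (j:ℤ) + ℓ + n then (2*n:ℂ) else 0)
          + (if (j':ℤ) = (j:ℤ) + ℓ - n then -(2*n:ℂ) else 0) := by
      intro j' hj'
      rw [Finset.mem_range] at hj'
      exact GG_eval hn hℓ1 hℓ2 (by omega) (by omega) (by omega) (by omega)
    rw [Finset.sum_congr rfl this, Finset.sum_add_distrib,
      sum_ite_int n ((j:ℤ) + ℓ + n) _, sum_ite_int n ((j:ℤ) + ℓ - n) _]
    congr 1
    · apply if_congr _ rfl rfl
      omega
    · apply if_congr _ rfl rfl
      omega
  rw [Finset.sum_congr rfl step1, Finset.sum_add_distrib, count_lt n (-ℓ) _,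
    count_ge n ((n:ℤ) - ℓ) _ (by omega)]
  have h1 : (min n (-ℓ).toNat : ℕ) = (-ℓ).toNat := by omega
  have h2 : ((n:ℤ) - ((n:ℤ) - ℓ)).toNat = ℓ.toNat := by omega
  rw [h1, h2]
  rcases le_or_gt 0 ℓ with h | h
  · have e1 : (-ℓ).toNat = 0 := by omega
    have e2 : (ℓ.toNat : ℂ) = (ℓ : ℂ) := by
      exact_mod_cast congrArg (fun z : ℤ => (z : ℂ)) (Int.toNat_of_nonneg h)
    rw [e1, e2]
    push_cast
    ring
  · have e1 : (ℓ.toNat) = 0 := by omega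
    have e2 : ((-ℓ).toNat : ℂ) = -(ℓ : ℂ) := by
      have h3 : ((-ℓ).toNat : ℤ) = -ℓ := Int.toNat_of_nonneg (by omega)
      exact_mod_cast congrArg (fun z : ℤ => (z : ℂ)) h3
    rw [e1, e2]
    push_cast
    ring


def DD (n k : ℕ) : ℂ := ∑ j ∈ Finset.range n, ww n ^ ((j:ℤ) * (2 * (k:ℤ) + 1))

lemma normSq_DD (n k : ℕ) : (Complex.normSq (DD n k) : ℂ)
    = ∑ j ∈ Finset.range n, ∑ j' ∈ Finset.range n,
        ww n ^ (((j:ℤ) - (j':ℤ)) * (2 * (k:ℤ) + 1)) := by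
  rw [← Complex.mul_conj]
  rw [DD, map_sum, Finset.sum_mul_sum]
  apply Finset.sum_congr rfl
  intro j _
  apply Finset.sum_congr rfl
  intro j' _
  have hc : (starRingEnd ℂ) (ww n ^ ((j':ℤ) * (2 * (k:ℤ) + 1)))
      = ww n ^ (-((j':ℤ) * (2 * (k:ℤ) + 1))) := by
    rw [ww_zpow, ww_zpow, ← Complex.exp_conj]
    congr 1
    simp only [map_mul, map_div₀, Complex.conj_I, map_intCast, Complex.conj_ofReal,
      map_ofNat, map_natCast]
    push_cast
    ring
  rw [hc, ← zpow_add₀ (ww_ne_zero n)]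
  congr 1
  ring

lemma ww_pow_n {n : ℕ} (hn : 1 ≤ n) (k : ℕ) :
    ww n ^ ((n:ℤ) * (2 * (k:ℤ) + 1)) = Complex.I * (-1) ^ k := by
  have hwn : ww n ^ (n:ℤ) = Complex.I := by
    rw [ww_zpow]
    have hn0 : (n : ℂ) ≠ 0 := Nat.cast_ne_zero.mpr (by omega)
    have : Complex.I * (((n:ℤ):ℂ) * (Real.pi:ℂ) / (2 * n)) = (Real.pi:ℂ) / 2 * Complex.I := by
      push_cast
      field_simp
    rw [this, Complex.exp_mul_I]
    have c1 : Complex.cos ((Real.pi:ℂ) / 2) = 0 := by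
      rw [show ((Real.pi:ℂ)/2) = ((Real.pi/2 : ℝ) : ℂ) by push_cast; ring, ← Complex.ofReal_cos,
        Real.cos_pi_div_two]
      simp
    have s1 : Complex.sin ((Real.pi:ℂ) / 2) = 1 := by
      rw [show ((Real.pi:ℂ)/2) = ((Real.pi/2 : ℝ) : ℂ) by push_cast; ring, ← Complex.ofReal_sin,
        Real.sin_pi_div_two]
      simp
    rw [c1, s1]
    ring
  rw [zpow_mul, hwn]
  have : (2 * (k:ℤ) + 1) = ((2 * k + 1 : ℕ) : ℤ) := by push_cast; ring
  rw [this, zpow_natCast, pow_succ, pow_mul, Complex.I_sq]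
  ring

lemma key1 {n : ℕ} (hn : 1 ≤ n) {ℓ : ℤ} (hℓ1 : -(n:ℤ) < ℓ) (hℓ2 : ℓ < n) :
    ∑ k ∈ Finset.range (2 * n),
        ((-1:ℂ) ^ k * (Complex.normSq (DD n k) : ℂ)) * ww n ^ (ℓ * (2 * (k:ℤ) + 1))
      = 2 * n * Complex.I * ℓ := by
  have hk : ∀ k ∈ Finset.range (2 * n),
      ((-1:ℂ) ^ k * (Complex.normSq (DD n k) : ℂ)) * ww n ^ (ℓ * (2 * (k:ℤ) + 1))
        = -Complex.I * ∑ j ∈ Finset.range n, ∑ j' ∈ Finset.range n,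
            ww n ^ ((ℓ + (n:ℤ) + (j:ℤ) - (j':ℤ)) * (2 * (k:ℤ) + 1)) := by
    intro k _
    rw [normSq_DD]
    simp only [Finset.mul_sum, Finset.sum_mul]
    apply Finset.sum_congr rfl
    intro j _
    apply Finset.sum_congr rfl
    intro j' _
    have he : (ℓ + (n:ℤ) + (j:ℤ) - (j':ℤ)) * (2 * (k:ℤ) + 1)
        = ((j:ℤ) - (j':ℤ)) * (2 * (k:ℤ) + 1) + ((n:ℤ) * (2 * (k:ℤ) + 1)
            + ℓ * (2 * (k:ℤ) + 1)) := by ring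
    rw [he, zpow_add₀ (ww_ne_zero n), zpow_add₀ (ww_ne_zero n), ww_pow_n hn]
    set A := ww n ^ (((j:ℤ) - (j':ℤ)) * (2 * (k:ℤ) + 1))
    set B := ww n ^ (ℓ * (2 * (k:ℤ) + 1))
    linear_combination ((-1:ℂ)^k * A * B) * Complex.I_sq
  rw [Finset.sum_congr rfl hk, ← Finset.mul_sum]
  rw [Finset.sum_comm]
  have h4 : ∀ j ∈ Finset.range n,
      ∑ k ∈ Finset.range (2*n), ∑ j' ∈ Finset.range n,
          ww n ^ ((ℓ + (n:ℤ) + (j:ℤ) - (j':ℤ)) * (2 * (k:ℤ) + 1))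
        = ∑ j' ∈ Finset.range n, GG n (ℓ + (n:ℤ) + (j:ℤ) - (j':ℤ)) := by
    intro j _
    exact Finset.sum_comm
  rw [Finset.sum_congr rfl h4, Ssum hn hℓ1 hℓ2]
  push_cast
  ring

lemma key2 {n : ℕ} (hn : 1 ≤ n) :
    ∑ k ∈ Finset.range (2 * n), Complex.normSq (DD n k) = 2 * (n:ℝ) ^ 2 := by
  have hC : ∑ k ∈ Finset.range (2 * n), (Complex.normSq (DD n k) : ℂ) = 2 * (n:ℂ) ^ 2 := by
    have hk : ∀ k ∈ Finset.range (2 * n), (Complex.normSq (DD n k) : ℂ)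
        = ∑ j ∈ Finset.range n, ∑ j' ∈ Finset.range n,
            ww n ^ (((j:ℤ) - (j':ℤ)) * (2 * (k:ℤ) + 1)) := fun k _ => normSq_DD n k
    rw [Finset.sum_congr rfl hk, Finset.sum_comm]
    have h1 : ∀ j ∈ Finset.range n,
        ∑ k ∈ Finset.range (2*n), ∑ j' ∈ Finset.range n,
            ww n ^ (((j:ℤ) - (j':ℤ)) * (2 * (k:ℤ) + 1))
          = ∑ j' ∈ Finset.range n, GG n ((j:ℤ) - (j':ℤ)) := by
      intro j _
      exact Finset.sum_comm
    rw [Finset.sum_congr rfl h1]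
    have h2 : ∀ j ∈ Finset.range n,
        ∑ j' ∈ Finset.range n, GG n ((j:ℤ) - (j':ℤ)) = (2 * n : ℂ) := by
      intro j hj
      rw [Finset.mem_range] at hj
      have h3 : ∀ j' ∈ Finset.range n, GG n ((j:ℤ) - (j':ℤ))
          = (if (j':ℤ) = (j:ℤ) then (2*n:ℂ) else 0) := by
        intro j' hj'
        rw [Finset.mem_range] at hj'
        by_cases h : (j':ℤ) = (j:ℤ)
        · rw [if_pos h, h, sub_self, GG_zero]
        · rw [if_neg h, GG_not_dvd hn]
          intro hd
          rcases dvd_cases hn hd (by omega) (by omega) with h' | h' <;> omega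
      rw [Finset.sum_congr rfl h3, sum_ite_int n (j:ℤ) _, if_pos (by omega)]
    rw [Finset.sum_congr rfl h2, Finset.sum_const, Finset.card_range, nsmul_eq_mul]
    push_cast
    ring
  have := hC
  push_cast at this
  exact_mod_cast this

end BernAux

/-- **Bernstein inequality.** For a trigonometric polynomial `T` of order `< n`,
`max_{x ∈ 𝕋} |T'(x)| ≤ n · max_{x ∈ 𝕋} |T(x)|`. -/
theorem bernstein_inequality (n : ℕ) (hn : 1 ≤ n) (b : ℤ → ℂ) (T : ℝ → ℂ)
    (hT : ∀ x : ℝ, T x = ∑ ℓ ∈ lrange n, b ℓ * Complex.exp (Complex.I * ℓ * x)) (x : ℝ) :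
    ‖deriv T x‖ ≤ n * ⨆ y : ℝ, ‖T y‖ := by
  classical
  have hn0 : (n : ℝ) ≠ 0 := Nat.cast_ne_zero.mpr (by omega)
  have hnC : (2 * (n : ℂ)) ≠ 0 := by
    simp [Nat.cast_ne_zero]
    exact_mod_cast (by omega : n ≠ 0)
  set M := ⨆ y : ℝ, ‖T y‖ with hM
  have habs1 : ∀ (ℓ : ℤ) (y : ℝ), ‖Complex.exp (Complex.I * ℓ * y)‖ = 1 := by
    intro ℓ y
    have : Complex.I * ℓ * y = ((ℓ * y : ℝ) : ℂ) * Complex.I := by push_cast; ring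
    rw [this, Complex.norm_exp_ofReal_mul_I]
  have hbdd : BddAbove (Set.range fun y : ℝ => ‖T y‖) := by
    refine ⟨∑ ℓ ∈ lrange n, ‖b ℓ‖, ?_⟩
    rintro r ⟨y, rfl⟩
    simp only [hT y]
    refine le_trans (norm_sum_le _ _) (Finset.sum_le_sum ?_)
    intro ℓ _
    rw [norm_mul, habs1, mul_one]
  have hM0 : ∀ y, ‖T y‖ ≤ M := fun y => le_ciSup hbdd y
  -- derivative
  have hder : HasDerivAt T
      (∑ ℓ ∈ lrange n, b ℓ * (Complex.exp (Complex.I * ℓ * x) * (Complex.I * ℓ * 1))) x := by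
    have hTf : T = fun y : ℝ => ∑ ℓ ∈ lrange n, b ℓ * Complex.exp (Complex.I * ℓ * y) :=
      funext hT
    rw [hTf]
    apply HasDerivAt.fun_sum
    intro ℓ _
    have h1 : HasDerivAt (fun y : ℝ => (y : ℂ)) 1 x := by
      exact Complex.ofRealCLM.hasDerivAt (x := x)
    exact ((h1.const_mul (Complex.I * ℓ)).cexp).const_mul (b ℓ)
  have hdx : deriv T x = ∑ ℓ ∈ lrange n, b ℓ * Complex.exp (Complex.I * ℓ * x) * (Complex.I * ℓ) := by
    rw [hder.deriv]
    exact Finset.sum_congr rfl fun ℓ _ => by ring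
  set A : ℕ → ℂ := fun k => ((-1:ℂ)^k * (Complex.normSq (BernAux.DD n k) : ℂ)) / (2 * n) with hA
  set t : ℕ → ℝ := fun k => (2*k+1) * Real.pi / (2*n) with htdef
  have hTk : ∀ k : ℕ, T (x + t k)
      = ∑ ℓ ∈ lrange n, b ℓ * Complex.exp (Complex.I * ℓ * x)
          * BernAux.ww n ^ (ℓ * (2 * (k:ℤ) + 1)) := by
    intro k
    rw [hT]
    apply Finset.sum_congr rfl
    intro ℓ _
    rw [BernAux.ww_zpow]
    have harg : Complex.I * ℓ * ((x + t k : ℝ) : ℂ)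
        = Complex.I * ℓ * (x:ℂ) + Complex.I * (((ℓ * (2 * (k:ℤ) + 1) : ℤ) : ℂ) * Real.pi / (2*n)) := by
      rw [htdef]
      push_cast
      field_simp
    rw [harg, Complex.exp_add]
    ring
  have hswap : ∑ k ∈ Finset.range (2*n), A k * T (x + t k)
      = ∑ ℓ ∈ lrange n, b ℓ * Complex.exp (Complex.I * ℓ * x) * (Complex.I * ℓ) := by
    calc ∑ k ∈ Finset.range (2*n), A k * T (x + t k)
        = ∑ k ∈ Finset.range (2*n), ∑ ℓ ∈ lrange n,
            (b ℓ * Complex.exp (Complex.I * ℓ * x))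
              * (A k * BernAux.ww n ^ (ℓ * (2 * (k:ℤ) + 1))) := by
          apply Finset.sum_congr rfl
          intro k _
          rw [hTk k, Finset.mul_sum]
          exact Finset.sum_congr rfl fun ℓ _ => by ring
      _ = ∑ ℓ ∈ lrange n, ∑ k ∈ Finset.range (2*n),
            (b ℓ * Complex.exp (Complex.I * ℓ * x))
              * (A k * BernAux.ww n ^ (ℓ * (2 * (k:ℤ) + 1))) := Finset.sum_comm
      _ = ∑ ℓ ∈ lrange n, b ℓ * Complex.exp (Complex.I * ℓ * x) * (Complex.I * ℓ) := by
          apply Finset.sum_congr rfl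
          intro ℓ hℓ
          rw [← Finset.mul_sum]
          congr 1
          rw [lrange, Finset.mem_Ioo] at hℓ
          have hsum : ∑ k ∈ Finset.range (2*n),
              A k * BernAux.ww n ^ (ℓ * (2 * (k:ℤ) + 1))
            = (∑ k ∈ Finset.range (2*n),
                ((-1:ℂ)^k * (Complex.normSq (BernAux.DD n k) : ℂ))
                  * BernAux.ww n ^ (ℓ * (2 * (k:ℤ) + 1))) / (2 * n) := by
            rw [Finset.sum_div]
            exact Finset.sum_congr rfl fun k _ => by rw [hA]; ring
          rw [hsum, BernAux.key1 hn hℓ.1 hℓ.2]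
          have hnC' : (n:ℂ) ≠ 0 := by exact_mod_cast hn0
          field_simp
  have hrepr : deriv T x = ∑ k ∈ Finset.range (2*n), A k * T (x + t k) := by
    rw [hdx, hswap]
  rw [hrepr]
  have habsA : ∀ k : ℕ, ‖A k‖ = Complex.normSq (BernAux.DD n k) / (2*n) := by
    intro k
    rw [hA]
    simp only [norm_div, norm_mul, norm_pow, norm_neg, norm_one, one_pow, one_mul]
    rw [Complex.norm_real, Real.norm_of_nonneg (Complex.normSq_nonneg _)]
    congr 1
    rw [Complex.norm_two, Complex.norm_natCast]
  calc ‖∑ k ∈ Finset.range (2*n), A k * T (x + t k)‖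
      ≤ ∑ k ∈ Finset.range (2*n), ‖A k * T (x + t k)‖ :=
        norm_sum_le _ _
    _ ≤ ∑ k ∈ Finset.range (2*n), Complex.normSq (BernAux.DD n k) / (2*n) * M := by
        apply Finset.sum_le_sum
        intro k _
        rw [norm_mul, habsA k]
        exact mul_le_mul_of_nonneg_left (hM0 _)
          (div_nonneg (Complex.normSq_nonneg _) (by positivity))
    _ = (∑ k ∈ Finset.range (2*n), Complex.normSq (BernAux.DD n k)) / (2*n) * M := by
        rw [← Finset.sum_mul, ← Finset.sum_div]
    _ = n * M := by
        rw [BernAux.key2 hn]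
        field_simp

end
end

section
/- Let n ≥ 1 be an integer, T a trigonometric polynomial of order < n, and N a positive integer with N ≥ 4πn. Then (1/2) max_{x∈𝕋} |T(x)| ≤ max_{0≤k≤N} |T(2πk/N)| ≤ max_{x∈𝕋} |T(x)|. -/
open MeasureTheory ProbabilityTheory

noncomputable section

lemma aux_abs_exp (ℓ : ℤ) (y : ℝ) : ‖Complex.exp (Complex.I * ℓ * y)‖ = 1 := by
  rw [show Complex.I * ℓ * y = ((ℓ * y : ℝ) : ℂ) * Complex.I by push_cast; ring,
    Complex.norm_exp_ofReal_mul_I]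

lemma aux_expsum (N : ℕ) (hN : 0 < N) (m : ℤ) (hmN : m.natAbs < N) :
    ∑ k ∈ Finset.range N, Complex.exp (Complex.I * m * ((2 * Real.pi * k / N : ℝ) : ℂ)) =
      if m = 0 then (N : ℂ) else 0 := by
  by_cases hm : m = 0
  · simp [hm]
  · rw [if_neg hm]
    have hNc : (N : ℂ) ≠ 0 := Nat.cast_ne_zero.mpr hN.ne'
    have hπ : (Real.pi : ℂ) ≠ 0 := Complex.ofReal_ne_zero.mpr Real.pi_ne_zero
    set z := Complex.exp (Complex.I * m * ((2 * Real.pi / N : ℝ) : ℂ)) with hz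
    have hterm : ∀ k ∈ Finset.range N,
        Complex.exp (Complex.I * m * ((2 * Real.pi * k / N : ℝ) : ℂ)) = z ^ k := by
      intro k _
      rw [hz, ← Complex.exp_nat_mul]
      congr 1
      push_cast
      ring
    rw [Finset.sum_congr rfl hterm]
    have hzN : z ^ N = 1 := by
      rw [hz, ← Complex.exp_nat_mul]
      have harg : (N : ℂ) * (Complex.I * m * ((2 * Real.pi / N : ℝ) : ℂ)) =
          m * (2 * Real.pi * Complex.I) := by
        push_cast
        field_simp
      rw [harg, Complex.exp_int_mul_two_pi_mul_I]
    have hz1 : z ≠ 1 := by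
      intro h
      rw [hz, Complex.exp_eq_one_iff] at h
      obtain ⟨k, hk⟩ := h
      rw [show ((2 * Real.pi / N : ℝ) : ℂ) = 2 * (Real.pi : ℂ) / N by push_cast; ring] at hk
      have h2 : (m : ℂ) * (2 * Real.pi * Complex.I) = (k * N) * (2 * Real.pi * Complex.I) := by
        have h3 : (N : ℂ) * (Complex.I * m * (2 * (Real.pi : ℂ) / N)) =
            (N : ℂ) * (k * (2 * Real.pi * Complex.I)) := by rw [hk]
        calc (m : ℂ) * (2 * Real.pi * Complex.I)
            = (N : ℂ) * (Complex.I * m * (2 * (Real.pi : ℂ) / N)) := by field_simp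
          _ = (N : ℂ) * (k * (2 * Real.pi * Complex.I)) := h3
          _ = (k * N) * (2 * Real.pi * Complex.I) := by ring
      have hne : (2 * (Real.pi : ℂ) * Complex.I) ≠ 0 :=
        mul_ne_zero (mul_ne_zero two_ne_zero hπ) Complex.I_ne_zero
      have hmk : (m : ℂ) = (k * N : ℤ) := by
        push_cast
        exact mul_right_cancel₀ hne h2
      have hmk' : m = k * N := by exact_mod_cast hmk
      have habs : m.natAbs = k.natAbs * N := by
        rw [hmk', Int.natAbs_mul, Int.natAbs_natCast]
      rcases Nat.eq_zero_or_pos k.natAbs with h0 | h1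
      · rw [h0, zero_mul] at habs
        exact hm (by omega)
      · have : N ≤ k.natAbs * N := Nat.le_mul_of_pos_left N h1
        omega
    rw [geom_sum_eq hz1, hzN]
    simp

lemma aux_inner_count (j d : ℕ) (hd : d < j) (w : ℂ) :
    ∑ a ∈ Finset.range j, ∑ c ∈ Finset.range j,
      (if (a : ℤ) - (c : ℤ) = (d : ℤ) then w else 0) = ((j - d : ℕ) : ℂ) * w := by
  have h1 : ∀ a ∈ Finset.range j,
      (∑ c ∈ Finset.range j, if (a : ℤ) - (c : ℤ) = (d : ℤ) then w else 0) =
        if d ≤ a then w else 0 := by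
    intro a ha
    rw [Finset.mem_range] at ha
    by_cases hda : d ≤ a
    · rw [if_pos hda]
      rw [Finset.sum_congr rfl (fun c _ => by
        rw [if_congr (show ((a : ℤ) - c = (d : ℤ)) ↔ c = a - d by omega) rfl rfl])]
      rw [Finset.sum_ite_eq' (Finset.range j) (a - d) (fun _ => w)]
      rw [if_pos (Finset.mem_range.mpr (by omega))]
    · rw [if_neg hda]
      apply Finset.sum_eq_zero
      intro c hc
      rw [Finset.mem_range] at hc
      rw [if_neg (by omega)]
  rw [Finset.sum_congr rfl h1, Finset.sum_ite, Finset.sum_const, Finset.sum_const_zero, add_zero]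
  have hcard : ((Finset.range j).filter (fun a => d ≤ a)).card = j - d := by
    have : (Finset.range j).filter (fun a => d ≤ a) = Finset.Ico d j := by
      ext a
      simp [Finset.mem_Ico, And.comm]
    rw [this, Nat.card_Ico]
  rw [hcard, nsmul_eq_mul]

lemma aux_pair_count (j : ℕ) (ℓ : ℤ) (hj : ℓ.natAbs < j) (w : ℂ) :
    ∑ a ∈ Finset.range j, ∑ c ∈ Finset.range j,
      (if (a : ℤ) - (c : ℤ) = ℓ then w else 0) = ((j - ℓ.natAbs : ℕ) : ℂ) * w := by
  rcases le_or_gt 0 ℓ with hl | hl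
  · rw [Finset.sum_congr rfl (fun a _ => Finset.sum_congr rfl (fun c _ => by
      rw [if_congr (show ((a : ℤ) - c = ℓ) ↔ ((a : ℤ) - c = (ℓ.natAbs : ℤ)) by omega) rfl rfl]))]
    exact aux_inner_count j ℓ.natAbs hj w
  · rw [Finset.sum_comm]
    rw [Finset.sum_congr rfl (fun c _ => Finset.sum_congr rfl (fun a _ => by
      rw [if_congr (show ((a : ℤ) - c = ℓ) ↔ ((c : ℤ) - a = (ℓ.natAbs : ℤ)) by omega) rfl rfl]))]
    exact aux_inner_count j ℓ.natAbs hj w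

def pk (j : ℕ) (t : ℝ) : ℂ :=
  ∑ a ∈ Finset.range j, ∑ c ∈ Finset.range j,
    Complex.exp (Complex.I * ((a : ℤ) - (c : ℤ)) * t)

lemma aux_pk_eq (j : ℕ) (t : ℝ) :
    pk j t =
      ((Complex.normSq (∑ a ∈ Finset.range j, Complex.exp (Complex.I * a * t)) : ℝ) : ℂ) := by
  rw [← Complex.mul_conj, map_sum, Finset.sum_mul_sum]
  unfold pk
  refine Finset.sum_congr rfl fun a _ => Finset.sum_congr rfl fun c _ => ?_
  rw [← Complex.exp_conj, ← Complex.exp_add]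
  congr 1
  simp only [map_mul, Complex.conj_I, map_natCast, Complex.conj_ofReal]
  push_cast
  ring

lemma aux_Qsum (n N j : ℕ) (hn : 1 ≤ n) (hnj : n ≤ j) (hjN : j + n ≤ N) (b : ℤ → ℂ) (x : ℝ) :
    ∑ k ∈ Finset.range N,
        (∑ ℓ ∈ lrange n, b ℓ * Complex.exp (Complex.I * ℓ * ((2 * Real.pi * k / N : ℝ) : ℂ))) *
          pk j (x - 2 * Real.pi * k / N) =
      (N : ℂ) * ∑ ℓ ∈ lrange n,
        ((j - ℓ.natAbs : ℕ) : ℂ) * (b ℓ * Complex.exp (Complex.I * ℓ * x)) := by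
  have hN : 0 < N := by omega
  simp only [Finset.sum_mul]
  rw [Finset.sum_comm, Finset.mul_sum]
  refine Finset.sum_congr rfl fun ℓ hℓ => ?_
  have hℓ' : -(n : ℤ) < ℓ ∧ ℓ < n := by simpa [lrange, Finset.mem_Ioo] using hℓ
  calc
    ∑ k ∈ Finset.range N,
        (b ℓ * Complex.exp (Complex.I * ℓ * ((2 * Real.pi * k / N : ℝ) : ℂ))) *
          pk j (x - 2 * Real.pi * k / N)
        = ∑ k ∈ Finset.range N, ∑ a ∈ Finset.range j, ∑ c ∈ Finset.range j,
            (b ℓ * Complex.exp (Complex.I * ((a : ℤ) - (c : ℤ)) * x)) *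
              Complex.exp (Complex.I * ((ℓ - ((a : ℤ) - (c : ℤ)) : ℤ) : ℂ) *
                ((2 * Real.pi * k / N : ℝ) : ℂ)) := by
      refine Finset.sum_congr rfl fun k _ => ?_
      unfold pk
      simp only [Finset.mul_sum]
      refine Finset.sum_congr rfl fun a _ => Finset.sum_congr rfl fun c _ => ?_
      conv_lhs => rw [mul_assoc, ← Complex.exp_add]
      conv_rhs => rw [mul_assoc, ← Complex.exp_add]
      congr 2
      push_cast
      ring
    _ = ∑ a ∈ Finset.range j, ∑ c ∈ Finset.range j,
          (b ℓ * Complex.exp (Complex.I * ((a : ℤ) - (c : ℤ)) * x)) *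
            ∑ k ∈ Finset.range N,
              Complex.exp (Complex.I * ((ℓ - ((a : ℤ) - (c : ℤ)) : ℤ) : ℂ) *
                ((2 * Real.pi * k / N : ℝ) : ℂ)) := by
      rw [Finset.sum_comm]
      refine Finset.sum_congr rfl fun a _ => ?_
      rw [Finset.sum_comm]
      refine Finset.sum_congr rfl fun c _ => ?_
      rw [Finset.mul_sum]
    _ = ∑ a ∈ Finset.range j, ∑ c ∈ Finset.range j,
          (if (a : ℤ) - (c : ℤ) = ℓ then
            (N : ℂ) * (b ℓ * Complex.exp (Complex.I * ℓ * x)) else 0) := by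
      refine Finset.sum_congr rfl fun a ha => Finset.sum_congr rfl fun c hc => ?_
      rw [Finset.mem_range] at ha hc
      rw [aux_expsum N hN (ℓ - ((a : ℤ) - c)) (by omega)]
      by_cases h : (a : ℤ) - c = ℓ
      · rw [if_pos (by omega), if_pos h]
        have hc' : (((a : ℤ) : ℂ)) - (((c : ℤ) : ℂ)) = (ℓ : ℂ) := by exact_mod_cast h
        rw [hc']
        ring
      · rw [if_neg (by omega), if_neg h, mul_zero]
    _ = ((j - ℓ.natAbs : ℕ) : ℂ) * ((N : ℂ) * (b ℓ * Complex.exp (Complex.I * ℓ * x))) :=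
      aux_pair_count j ℓ (by omega) _
    _ = (N : ℂ) * (((j - ℓ.natAbs : ℕ) : ℂ) * (b ℓ * Complex.exp (Complex.I * ℓ * x))) := by
      ring

lemma aux_lrange_one : lrange 1 = {0} := by
  ext m
  simp only [lrange, Finset.mem_Ioo, Finset.mem_singleton]
  omega

lemma aux_pk_avg (N j : ℕ) (hj : 1 ≤ j) (hjN : j + 1 ≤ N) (x : ℝ) :
    ∑ k ∈ Finset.range N, pk j (x - 2 * Real.pi * k / N) = (N : ℂ) * j := by
  have h := aux_Qsum 1 N j le_rfl hj hjN (fun _ => 1) x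
  rw [aux_lrange_one] at h
  simpa using h

lemma aux_pk_real_sum (N j : ℕ) (hj : 1 ≤ j) (hjN : j + 1 ≤ N) (x : ℝ) :
    ∑ k ∈ Finset.range N,
        Complex.normSq (∑ a ∈ Finset.range j,
          Complex.exp (Complex.I * a * ((x - 2 * Real.pi * k / N : ℝ) : ℂ))) = (N : ℝ) * j := by
  have h := aux_pk_avg N j hj hjN x
  rw [Finset.sum_congr rfl (fun k _ => aux_pk_eq j _)] at h
  rw [← Complex.ofReal_sum] at h
  exact_mod_cast h

/-- For a trigonometric polynomial `T` of order `< n` and `N ≥ 4πn`,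
`(1/2) max_{x ∈ 𝕋} |T(x)| ≤ max_{0 ≤ k ≤ N} |T(2πk/N)| ≤ max_{x ∈ 𝕋} |T(x)|`. -/
theorem mesh_norm_inequality (n N : ℕ) (hn : 1 ≤ n) (hN : 4 * Real.pi * n ≤ N)
    (b : ℤ → ℂ) (T : ℝ → ℂ)
    (hT : ∀ x : ℝ, T x = ∑ ℓ ∈ lrange n, b ℓ * Complex.exp (Complex.I * ℓ * x)) :
    (1 / 2) * (⨆ y : ℝ, ‖T y‖) ≤
        (⨆ k : Fin (N + 1), ‖T (2 * Real.pi * ((k : ℕ) : ℝ) / N)‖) ∧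
      (⨆ k : Fin (N + 1), ‖T (2 * Real.pi * ((k : ℕ) : ℝ) / N)‖) ≤
        ⨆ y : ℝ, ‖T y‖ := by
  have hn0 : (0 : ℝ) ≤ n := Nat.cast_nonneg n
  have hn1 : (1 : ℝ) ≤ n := by exact_mod_cast hn
  have h12 : ((12 * n : ℕ) : ℝ) ≤ N := by
    push_cast
    nlinarith [Real.pi_gt_three]
  have h12' : 12 * n ≤ N := by exact_mod_cast h12
  have hN0 : 0 < N := by omega
  -- boundedness of |T| on ℝ
  have hbd : ∀ y : ℝ, ‖T y‖ ≤ ∑ ℓ ∈ lrange n, ‖b ℓ‖ := by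
    intro y
    rw [hT y]
    refine le_trans (norm_sum_le _ _) (le_of_eq (Finset.sum_congr rfl fun ℓ _ => ?_))
    rw [norm_mul, aux_abs_exp, mul_one]
  have hbdd : BddAbove (Set.range fun y : ℝ => ‖T y‖) := by
    refine ⟨∑ ℓ ∈ lrange n, ‖b ℓ‖, ?_⟩
    rintro v ⟨y, rfl⟩
    exact hbd y
  have hfin : BddAbove (Set.range fun k : Fin (N + 1) =>
      ‖T (2 * Real.pi * ((k : ℕ) : ℝ) / N)‖) := (Set.finite_range _).bddAbove
  set M' := ⨆ k : Fin (N + 1), ‖T (2 * Real.pi * ((k : ℕ) : ℝ) / N)‖ with hM'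
  have hM'le : ∀ k : ℕ, k < N → ‖T (2 * Real.pi * (k : ℝ) / N)‖ ≤ M' := by
    intro k hk
    have := le_ciSup hfin (⟨k, by omega⟩ : Fin (N + 1))
    simpa using this
  have hM'0 : 0 ≤ M' := le_trans (norm_nonneg _) (hM'le 0 hN0)
  constructor
  · -- main inequality
    have key : ∀ x : ℝ, ‖T x‖ ≤ 2 * M' := by
      intro x
      have hdiff : ∀ ℓ ∈ lrange n,
          (((3 * n - ℓ.natAbs : ℕ) : ℂ) - ((n - ℓ.natAbs : ℕ) : ℂ)) = ((2 * n : ℕ) : ℂ) := by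
        intro ℓ hℓ
        have hℓn : ℓ.natAbs < n := by
          have := Finset.mem_Ioo.mp hℓ
          omega
        rw [Nat.cast_sub (by omega), Nat.cast_sub (by omega)]
        push_cast
        ring
      have e3 : ∑ k ∈ Finset.range N,
          T (2 * Real.pi * k / N) * pk (3 * n) (x - 2 * Real.pi * k / N) =
          (N : ℂ) * ∑ ℓ ∈ lrange n,
            ((3 * n - ℓ.natAbs : ℕ) : ℂ) * (b ℓ * Complex.exp (Complex.I * ℓ * x)) := by
        simp only [hT]
        exact aux_Qsum n N (3 * n) hn (by omega) (by omega) b x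
      have e1 : ∑ k ∈ Finset.range N,
          T (2 * Real.pi * k / N) * pk n (x - 2 * Real.pi * k / N) =
          (N : ℂ) * ∑ ℓ ∈ lrange n,
            ((n - ℓ.natAbs : ℕ) : ℂ) * (b ℓ * Complex.exp (Complex.I * ℓ * x)) := by
        simp only [hT]
        exact aux_Qsum n N n hn le_rfl (by omega) b x
      have hrecon : ((2 * n * N : ℕ) : ℂ) * T x =
          ∑ k ∈ Finset.range N, T (2 * Real.pi * k / N) *
            (pk (3 * n) (x - 2 * Real.pi * k / N) - pk n (x - 2 * Real.pi * k / N)) := by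
        calc ((2 * n * N : ℕ) : ℂ) * T x
            = (N : ℂ) * ∑ ℓ ∈ lrange n,
                ((((3 * n - ℓ.natAbs : ℕ) : ℂ) - ((n - ℓ.natAbs : ℕ) : ℂ)) *
                  (b ℓ * Complex.exp (Complex.I * ℓ * x))) := by
              rw [Finset.sum_congr rfl fun ℓ hℓ => by rw [hdiff ℓ hℓ]]
              rw [← Finset.mul_sum, hT x]
              push_cast
              ring
          _ = (N : ℂ) * ∑ ℓ ∈ lrange n,
                (((3 * n - ℓ.natAbs : ℕ) : ℂ) * (b ℓ * Complex.exp (Complex.I * ℓ * x)) -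
                  ((n - ℓ.natAbs : ℕ) : ℂ) * (b ℓ * Complex.exp (Complex.I * ℓ * x))) := by
              rw [Finset.sum_congr rfl fun ℓ _ => sub_mul _ _ _]
          _ = ∑ k ∈ Finset.range N, T (2 * Real.pi * k / N) *
                (pk (3 * n) (x - 2 * Real.pi * k / N) - pk n (x - 2 * Real.pi * k / N)) := by
              rw [Finset.sum_sub_distrib, mul_sub, ← e3, ← e1, ← Finset.sum_sub_distrib]
              exact Finset.sum_congr rfl fun k _ => (mul_sub _ _ _).symm
      have habs : ((2 * n * N : ℕ) : ℝ) * ‖T x‖ ≤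
          ∑ k ∈ Finset.range N, M' *
            (Complex.normSq (∑ a ∈ Finset.range (3 * n),
                Complex.exp (Complex.I * a * ((x - 2 * Real.pi * k / N : ℝ) : ℂ))) +
              Complex.normSq (∑ a ∈ Finset.range n,
                Complex.exp (Complex.I * a * ((x - 2 * Real.pi * k / N : ℝ) : ℂ)))) := by
        have h1 : ((2 * n * N : ℕ) : ℝ) * ‖T x‖ =
            ‖((2 * n * N : ℕ) : ℂ) * T x‖ := by
          rw [norm_mul, Complex.norm_natCast]
        rw [h1, hrecon]
        refine le_trans (norm_sum_le _ _) (Finset.sum_le_sum fun k hk => ?_)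
        rw [Finset.mem_range] at hk
        rw [norm_mul]
        have hA : ‖pk (3 * n) (x - 2 * Real.pi * k / N) -
            pk n (x - 2 * Real.pi * k / N)‖ ≤
            Complex.normSq (∑ a ∈ Finset.range (3 * n),
                Complex.exp (Complex.I * a * ((x - 2 * Real.pi * k / N : ℝ) : ℂ))) +
              Complex.normSq (∑ a ∈ Finset.range n,
                Complex.exp (Complex.I * a * ((x - 2 * Real.pi * k / N : ℝ) : ℂ))) := by
          rw [aux_pk_eq, aux_pk_eq, ← Complex.ofReal_sub, Complex.norm_real, Real.norm_eq_abs]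
          have h3 := Complex.normSq_nonneg (∑ a ∈ Finset.range (3 * n),
            Complex.exp (Complex.I * a * ((x - 2 * Real.pi * k / N : ℝ) : ℂ)))
          have h4 := Complex.normSq_nonneg (∑ a ∈ Finset.range n,
            Complex.exp (Complex.I * a * ((x - 2 * Real.pi * k / N : ℝ) : ℂ)))
          rw [abs_sub_le_iff]
          constructor <;> linarith
        exact mul_le_mul (hM'le k hk) hA (norm_nonneg _) hM'0
      have hs3 := aux_pk_real_sum N (3 * n) (by omega) (by omega) x
      have hs1 := aux_pk_real_sum N n hn (by omega) x
      have hsum : ∑ k ∈ Finset.range N, M' *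
          (Complex.normSq (∑ a ∈ Finset.range (3 * n),
              Complex.exp (Complex.I * a * ((x - 2 * Real.pi * k / N : ℝ) : ℂ))) +
            Complex.normSq (∑ a ∈ Finset.range n,
              Complex.exp (Complex.I * a * ((x - 2 * Real.pi * k / N : ℝ) : ℂ)))) =
          M' * ((N : ℝ) * (3 * n) + (N : ℝ) * n) := by
        rw [← Finset.mul_sum, Finset.sum_add_distrib, hs3, hs1]
        push_cast
        ring
      rw [hsum] at habs
      push_cast at habs
      have hNpos : (0 : ℝ) < N := by exact_mod_cast hN0
      nlinarith [habs, mul_pos (lt_of_lt_of_le zero_lt_one hn1) hNpos]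
    have h := ciSup_le key
    linarith
  · exact ciSup_le fun k => le_ciSup hbdd (2 * Real.pi * ((k : ℕ) : ℝ) / N)


end
end

section
/- For every integer n ≥ 1 and every x ∈ 𝕋 one has |Φ_n(x) − 1| ≤ n|x|, where |x| is the distance from x to 0 modulo 2π. -/
open MeasureTheory ProbabilityTheory

noncomputable section

/-- `‖e^{it} - 1‖ ≤ |t|` for real `t`. -/
lemma norm_exp_I_sub_one (t : ℝ) :
    ‖Complex.exp (Complex.I * t) - 1‖ ≤ |t| := by
  have he : Complex.exp (Complex.I * t) - 1 =
      Complex.ofReal (Real.cos t - 1) + Complex.ofReal (Real.sin t) * Complex.I := by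
    rw [mul_comm, Complex.exp_mul_I]
    push_cast
    ring
  have hsq : (‖Complex.exp (Complex.I * t) - 1‖) ^ 2
      = (Real.cos t - 1) ^ 2 + (Real.sin t) ^ 2 := by
    rw [he, Complex.sq_norm, Complex.normSq_add_mul_I]
  have hcos : Real.cos t = 1 - 2 * Real.sin (t / 2) ^ 2 := by
    have h1 := Real.cos_two_mul' (t / 2)
    have h2 : Real.sin (t/2)^2 + Real.cos (t/2)^2 = 1 := Real.sin_sq_add_cos_sq _
    have h3 : 2 * (t / 2) = t := by ring
    rw [h3] at h1
    linarith
  have hs : |Real.sin (t / 2)| ≤ |t / 2| := Real.abs_sin_le_abs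
  have hs2 : Real.sin (t / 2) ^ 2 ≤ (t / 2) ^ 2 := by
    have := mul_self_le_mul_self (abs_nonneg _) hs
    simpa [← sq, sq_abs] using this
  have hpyth : Real.sin t ^ 2 + Real.cos t ^ 2 = 1 := Real.sin_sq_add_cos_sq t
  have hle : (‖Complex.exp (Complex.I * t) - 1‖) ^ 2 ≤ |t| ^ 2 := by
    rw [hsq, sq_abs]
    nlinarith
  have h0 : (0:ℝ) ≤ ‖Complex.exp (Complex.I * t) - 1‖ := norm_nonneg _
  calc ‖Complex.exp (Complex.I * t) - 1‖
      = Real.sqrt ((‖Complex.exp (Complex.I * t) - 1‖) ^ 2) := by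
        rw [Real.sqrt_sq h0]
    _ ≤ Real.sqrt (|t| ^ 2) := Real.sqrt_le_sqrt hle
    _ = |t| := Real.sqrt_sq (abs_nonneg t)

/-- `|Φ_n(x) - 1| ≤ n |x|`, where `|x|` is the distance from `x` to `0` modulo `2π`. -/
theorem phi_near_one (F : LowPassFilter) (n : ℕ) (hn : 1 ≤ n) (x : ℝ) :
    ‖Phi F n x - 1‖ ≤ n * tnorm x := by
  -- the representative of x with minimal absolute value
  set k : ℤ := round ((2 * Real.pi)⁻¹ * x) with hk
  set y : ℝ := x - k * (2 * Real.pi) with hy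
  have hty : tnorm x = |y| := by
    rw [tnorm, AddCircle.norm_eq]
  -- exp is 2π-periodic in the relevant sense
  have hexp : ∀ ℓ : ℤ, Complex.exp (Complex.I * ℓ * x) = Complex.exp (Complex.I * (ℓ * y)) := by
    intro ℓ
    have : Complex.I * ℓ * x = Complex.I * (ℓ * y) + (ℓ * k) * (2 * Real.pi * Complex.I) := by
      push_cast [hy]
      ring
    rw [this, Complex.exp_add]
    have h1 : ((ℓ * k : ℤ) : ℂ) * (2 * Real.pi * Complex.I)
        = ↑ℓ * ↑k * (2 * (Real.pi:ℂ) * Complex.I) := by push_cast; ring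
    rw [← h1, Complex.exp_int_mul_two_pi_mul_I, mul_one]
  -- positivity of the normalizing sum
  set S : ℝ := ∑ ℓ ∈ lrange n, F.toFun (|(ℓ : ℝ)| / n) with hS
  have hterm : ∀ ℓ ∈ lrange n, 0 ≤ F.toFun (|(ℓ : ℝ)| / n) := fun ℓ _ => (F.mem_Icc _).1
  have h0mem : (0 : ℤ) ∈ lrange n := by
    simp only [lrange, Finset.mem_Ioo]
    constructor <;> [simp; exact_mod_cast hn] <;> omega
  have h0val : F.toFun (|((0:ℤ) : ℝ)| / n) = 1 := by
    apply F.eq_one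
    simp
  have hS1 : (1:ℝ) ≤ S := by
    rw [hS, ← h0val]
    exact Finset.single_le_sum hterm h0mem
  have hSpos : 0 < S := lt_of_lt_of_le one_pos hS1
  have hbarS : hbar F n = S⁻¹ := rfl
  -- rewrite Phi - 1
  have hkey : Phi F n x - 1 =
      (S⁻¹ : ℂ) * ∑ ℓ ∈ lrange n,
        (F.toFun (|(ℓ : ℝ)| / n) : ℂ) * (Complex.exp (Complex.I * ℓ * x) - 1) := by
    have hone : (S⁻¹ : ℂ) * ∑ ℓ ∈ lrange n, (F.toFun (|(ℓ : ℝ)| / n) : ℂ) = 1 := by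
      have : (∑ ℓ ∈ lrange n, (F.toFun (|(ℓ : ℝ)| / n) : ℂ)) = (S : ℂ) := by
        rw [hS]; norm_cast
      rw [this, ← Complex.ofReal_inv, ← Complex.ofReal_mul, inv_mul_cancel₀ hSpos.ne',
        Complex.ofReal_one]
    have h2 : (S⁻¹ : ℂ) * ∑ ℓ ∈ lrange n,
        (F.toFun (|(ℓ : ℝ)| / n) : ℂ) * (Complex.exp (Complex.I * ℓ * x) - 1)
        = (S⁻¹ : ℂ) * (∑ ℓ ∈ lrange n,
            (F.toFun (|(ℓ : ℝ)| / n) : ℂ) * Complex.exp (Complex.I * ℓ * x))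
          - (S⁻¹ : ℂ) * ∑ ℓ ∈ lrange n, (F.toFun (|(ℓ : ℝ)| / n) : ℂ) := by
      rw [← mul_sub, ← Finset.sum_sub_distrib]
      congr 1
      exact Finset.sum_congr rfl fun ℓ _ => by ring
    rw [h2, hone, Phi, hbarS, Complex.ofReal_inv]
  rw [hkey]
  -- bound each exponential term
  have hbound : ∀ ℓ ∈ lrange n,
      ‖(F.toFun (|(ℓ : ℝ)| / n) : ℂ) * (Complex.exp (Complex.I * ℓ * x) - 1)‖
        ≤ F.toFun (|(ℓ : ℝ)| / n) * (n * tnorm x) := by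
    intro ℓ hℓ
    rw [norm_mul, Complex.norm_real, Real.norm_eq_abs, abs_of_nonneg (hterm ℓ hℓ)]
    apply mul_le_mul_of_nonneg_left _ (hterm ℓ hℓ)
    rw [hexp ℓ]
    calc ‖Complex.exp (Complex.I * ((ℓ:ℂ) * y)) - 1‖
        ≤ |(ℓ:ℝ) * y| := by
          have := norm_exp_I_sub_one ((ℓ:ℝ) * y)
          simpa using this
      _ = |(ℓ:ℝ)| * |y| := abs_mul _ _
      _ ≤ n * tnorm x := by
          rw [hty]
          apply mul_le_mul_of_nonneg_right _ (abs_nonneg y)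
          simp only [lrange, Finset.mem_Ioo] at hℓ
          rw [← Int.cast_abs]
          exact_mod_cast le_of_lt (abs_lt.mpr hℓ)
  calc ‖(S⁻¹ : ℂ) * ∑ ℓ ∈ lrange n,
        (F.toFun (|(ℓ : ℝ)| / n) : ℂ) * (Complex.exp (Complex.I * ℓ * x) - 1)‖
      = S⁻¹ * ‖∑ ℓ ∈ lrange n,
        (F.toFun (|(ℓ : ℝ)| / n) : ℂ) * (Complex.exp (Complex.I * ℓ * x) - 1)‖ := by
        rw [norm_mul, norm_inv, Complex.norm_real, Real.norm_eq_abs, abs_of_nonneg hSpos.le]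
    _ ≤ S⁻¹ * ∑ ℓ ∈ lrange n, F.toFun (|(ℓ : ℝ)| / n) * (n * tnorm x) := by
        apply mul_le_mul_of_nonneg_left _ (inv_nonneg.mpr hSpos.le)
        exact (norm_sum_le _ _).trans (Finset.sum_le_sum hbound)
    _ = S⁻¹ * (S * (n * tnorm x)) := by rw [hS, ← Finset.sum_mul]
    _ = n * tnorm x := by field_simp
  

end
end

section
/- Assume S ≥ 2 and L > 0 are such that |Φ_n(x)| ≤ L / max(1, (n|x|)^S) for all x ∈ 𝕋 and n ≥ 1. Set m = min_{1≤k≤K} |A_k|, η = min_{k≠ℓ} |λ_k − λ_ℓ|, and C = max(1, (16ML/m)^{1/S}). Let n be an integer with n ≥ 4C/η, and assume max_{y∈𝕋} |E_n(y)| ≤ m/16. If x ∈ 𝕋 satisfies |x − λ_ℓ| ≥ C/n for every ℓ ∈ {1,…,K}, then |σ_n(x)| ≤ m/8. -/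
open MeasureTheory ProbabilityTheory

noncomputable section

lemma sigman_decomp (F : LowPassFilter) (n : ℕ) {K : ℕ} (A : Fin K → ℂ) (lam : Fin K → ℝ)
    (eps : ℤ → ℂ) (x : ℝ) :
    sigman F n A lam eps x = (∑ k, A k * Phi F n (x - lam k)) + En F n eps x := by
  simp only [sigman, Phi, En, muhat]
  have h1 : ∀ k : Fin K, A k * ((hbar F n : ℂ) *
      ∑ ℓ ∈ lrange n, (F.toFun (|(ℓ : ℝ)| / n) : ℂ) * Complex.exp (Complex.I * ℓ * ((x : ℂ) - (lam k : ℂ))))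
      = (hbar F n : ℂ) * ∑ ℓ ∈ lrange n,
        (F.toFun (|(ℓ : ℝ)| / n) : ℂ) * (A k * Complex.exp (Complex.I * ℓ * ((x : ℂ) - (lam k : ℂ)))) := by
    intro k
    rw [Finset.mul_sum, Finset.mul_sum, Finset.mul_sum]
    exact Finset.sum_congr rfl fun ℓ _ => by ring
  simp only [Complex.ofReal_sub, h1]
  rw [← Finset.mul_sum, ← mul_add]
  congr 1
  rw [Finset.sum_comm, ← Finset.sum_add_distrib]
  apply Finset.sum_congr rfl
  intro ℓ _
  have hexp : ∀ k : Fin K, Complex.exp (Complex.I * ℓ * ((x : ℂ) - (lam k : ℂ)))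
      = Complex.exp (-(Complex.I * ℓ * (lam k : ℂ))) * Complex.exp (Complex.I * ℓ * (x : ℂ)) := by
    intro k
    rw [← Complex.exp_add]
    congr 1
    ring
  simp only [hexp]
  rw [mul_add, add_mul]
  congr 1
  rw [Finset.mul_sum, Finset.sum_mul]
  exact Finset.sum_congr rfl fun k _ => by ring

/-- If `|x - λ_ℓ| ≥ C/n` for every `ℓ`, then `|σ_n(x)| ≤ m/8`. -/
theorem sigma_small_away_from_points (F : LowPassFilter) (S L : ℝ) (hS : 2 ≤ S) (hL : 0 < L)
    (hloc : ∀ ν : ℕ, 1 ≤ ν → ∀ y : ℝ,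
      ‖Phi F ν y‖ ≤ L / max 1 (((ν : ℝ) * tnorm y) ^ S))
    (K : ℕ) (hK : 1 ≤ K) (lam : Fin K → ℝ) (A : Fin K → ℂ)
    (hsep : ∀ k l : Fin K, k ≠ l → tnorm (lam k - lam l) ≠ 0) (hA : ∀ k, A k ≠ 0)
    (M : ℝ) (hM : M = ∑ k, ‖A k‖)
    (m : ℝ) (hm : m = ⨅ k : Fin K, ‖A k‖)
    (η : ℝ) (hη : η = ⨅ p : { p : Fin K × Fin K // p.1 ≠ p.2 }, tnorm (lam p.1.1 - lam p.1.2))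
    (C : ℝ) (hC : C = max 1 ((16 * M * L / m) ^ (1 / S)))
    (n : ℕ) (hn : 1 ≤ n) (hn4 : 4 * C / η ≤ (n : ℝ)) (eps : ℤ → ℂ)
    (hE : ∀ y : ℝ, ‖En F n eps y‖ ≤ m / 16)
    (x : ℝ) (hx : ∀ l : Fin K, C / n ≤ tnorm (x - lam l)) :
    ‖sigman F n A lam eps x‖ ≤ m / 8 := by
  have hne : Nonempty (Fin K) := Fin.pos_iff_nonempty.mp hK
  obtain ⟨k0, hk0⟩ := Finite.exists_min fun k => ‖A k‖
  have hm0 : 0 < m := lt_of_lt_of_le (norm_pos_iff.mpr (hA k0)) (hm ▸ le_ciInf hk0)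
  have hM0 : 0 ≤ M := hM ▸ Finset.sum_nonneg fun k _ => norm_nonneg _
  have hC1 : (1 : ℝ) ≤ C := hC ▸ le_max_left _ _
  have hC0 : (0 : ℝ) < C := lt_of_lt_of_le one_pos hC1
  have hS0 : (0 : ℝ) < S := lt_of_lt_of_le two_pos hS
  have ha0 : (0 : ℝ) ≤ 16 * M * L / m := by positivity
  have hCS : 16 * M * L / m ≤ C ^ S := by
    calc 16 * M * L / m = ((16 * M * L / m) ^ (1 / S)) ^ S := by
          rw [← Real.rpow_mul ha0, one_div, inv_mul_cancel₀ hS0.ne', Real.rpow_one]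
      _ ≤ C ^ S := Real.rpow_le_rpow (Real.rpow_nonneg ha0 _) (hC ▸ le_max_right _ _) hS0.le
  have hCpow1 : (1 : ℝ) ≤ C ^ S := by
    calc (1 : ℝ) = 1 ^ S := (Real.one_rpow S).symm
      _ ≤ C ^ S := Real.rpow_le_rpow zero_le_one hC1 hS0.le
  have hCpow0 : (0 : ℝ) < C ^ S := lt_of_lt_of_le one_pos hCpow1
  have hn0 : (0 : ℝ) < (n : ℝ) := by exact_mod_cast hn
  have hk : ∀ k, ‖A k * Phi F n (x - lam k)‖ ≤ ‖A k‖ * (L / C ^ S) := by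
    intro k
    rw [norm_mul]
    refine mul_le_mul_of_nonneg_left (le_trans (hloc n hn _) ?_) (norm_nonneg _)
    have hnt : C ≤ (n : ℝ) * tnorm (x - lam k) := by
      have h := hx k
      rw [div_le_iff₀ hn0] at h
      linarith
    have h2 : C ^ S ≤ max 1 (((n : ℝ) * tnorm (x - lam k)) ^ S) :=
      le_trans (Real.rpow_le_rpow hC0.le hnt hS0.le) (le_max_right _ _)
    gcongr
  have hsum : ‖∑ k, A k * Phi F n (x - lam k)‖ ≤ m / 16 := by
    calc ‖∑ k, A k * Phi F n (x - lam k)‖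
        ≤ ∑ k, ‖A k * Phi F n (x - lam k)‖ := norm_sum_le _ _
      _ ≤ ∑ k, ‖A k‖ * (L / C ^ S) := Finset.sum_le_sum fun k _ => hk k
      _ = M * L / C ^ S := by rw [← Finset.sum_mul, ← hM]; ring
      _ ≤ m / 16 := by
          rw [div_le_div_iff₀ hCpow0 (by norm_num)]
          have := (div_le_iff₀ hm0).mp hCS
          nlinarith
  calc ‖sigman F n A lam eps x‖
      = ‖(∑ k, A k * Phi F n (x - lam k)) + En F n eps x‖ := by
        rw [sigman_decomp]
    _ ≤ ‖∑ k, A k * Phi F n (x - lam k)‖ + ‖En F n eps x‖ :=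
        norm_add_le _ _
    _ ≤ m / 16 + m / 16 := add_le_add hsum (hE x)
    _ = m / 8 := by ring

end
end

section
/- Assume S ≥ 2 and L > 0 are such that |Φ_n(x)| ≤ L / max(1, (n|x|)^S) for all x ∈ 𝕋 and n ≥ 1. Set m = min_{1≤k≤K} |A_k|, η = min_{k≠ℓ} |λ_k − λ_ℓ|, and C = max(1, (16ML/m)^{1/S}). Let n be an integer with n ≥ 4C/η, and assume max_{y∈𝕋} |E_n(y)| ≤ m/16. Define 𝔾 = {x ∈ 𝕋 : |σ_n(x)| ≥ m/2} and 𝔾_ℓ = {x ∈ 𝔾 : |x − λ_ℓ| < C/n}. Then for each ℓ, diam(𝔾_ℓ) ≤ 2C/n, and for all ℓ ≠ k, dist(𝔾_ℓ, 𝔾_k) ≥ η/2 (distances measured modulo 2π). -/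
open MeasureTheory ProbabilityTheory

noncomputable section

lemma tnorm_symm (a b : ℝ) : tnorm (a - b) = tnorm (b - a) := by
  unfold tnorm
  rw [show ((a - b : ℝ) : AddCircle (2 * Real.pi)) = -((b - a : ℝ) : AddCircle (2 * Real.pi)) by
    rw [← QuotientAddGroup.mk_neg]; congr 1; ring, norm_neg]

lemma tnorm_tri (a b c : ℝ) : tnorm (a - b) ≤ tnorm (a - c) + tnorm (c - b) := by
  unfold tnorm
  rw [show ((a - b : ℝ) : AddCircle (2 * Real.pi)) =
      ((a - c : ℝ) : AddCircle (2 * Real.pi)) + ((c - b : ℝ) : AddCircle (2 * Real.pi)) by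
    rw [← QuotientAddGroup.mk_add]; congr 1; ring]
  exact norm_add_le _ _

lemma tnorm_nonneg' (a : ℝ) : 0 ≤ tnorm a := norm_nonneg _

/-- Diameter and separation of the clusters: `diam(𝔾_ℓ) ≤ 2C/n` and
`dist(𝔾_ℓ, 𝔾_k) ≥ η/2` for `ℓ ≠ k`, distances measured modulo `2π`. -/
theorem G_diam_and_separation (F : LowPassFilter) (S L : ℝ) (hS : 2 ≤ S) (hL : 0 < L)
    (hloc : ∀ ν : ℕ, 1 ≤ ν → ∀ y : ℝ,
      ‖Phi F ν y‖ ≤ L / max 1 (((ν : ℝ) * tnorm y) ^ S))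
    (K : ℕ) (hK : 1 ≤ K) (lam : Fin K → ℝ) (A : Fin K → ℂ)
    (hsep : ∀ k l : Fin K, k ≠ l → tnorm (lam k - lam l) ≠ 0) (hA : ∀ k, A k ≠ 0)
    (M : ℝ) (hM : M = ∑ k, ‖A k‖)
    (m : ℝ) (hm : m = ⨅ k : Fin K, ‖A k‖)
    (η : ℝ) (hη : η = ⨅ p : { p : Fin K × Fin K // p.1 ≠ p.2 }, tnorm (lam p.1.1 - lam p.1.2))
    (C : ℝ) (hC : C = max 1 ((16 * M * L / m) ^ (1 / S)))
    (n : ℕ) (hn : 1 ≤ n) (hn4 : 4 * C / η ≤ (n : ℝ)) (eps : ℤ → ℂ)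
    (hE : ∀ y : ℝ, ‖En F n eps y‖ ≤ m / 16) :
    (∀ l : Fin K, ∀ x ∈ Glset F n A lam eps m C l, ∀ y ∈ Glset F n A lam eps m C l,
      tnorm (x - y) ≤ 2 * C / n) ∧
    (∀ l k : Fin K, l ≠ k → ∀ x ∈ Glset F n A lam eps m C l, ∀ y ∈ Glset F n A lam eps m C k,
      η / 2 ≤ tnorm (x - y)) := by
  constructor
  · intro l x hx y hy
    calc tnorm (x - y) ≤ tnorm (x - lam l) + tnorm (lam l - y) := tnorm_tri _ _ _
      _ = tnorm (x - lam l) + tnorm (y - lam l) := by rw [tnorm_symm (lam l) y]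
      _ ≤ C / n + C / n := add_le_add hx.2.le hy.2.le
      _ = 2 * C / n := by ring
  · intro l k hlk x hx y hy
    have hC1 : (1:ℝ) ≤ C := hC ▸ le_max_left _ _
    have hnpos : (0:ℝ) < n := by exact_mod_cast hn
    have hne : Nonempty {p : Fin K × Fin K // p.1 ≠ p.2} := ⟨⟨(l, k), hlk⟩⟩
    have hbdd : BddBelow (Set.range fun p : {p : Fin K × Fin K // p.1 ≠ p.2} =>
        tnorm (lam p.1.1 - lam p.1.2)) := ⟨0, by rintro _ ⟨p, rfl⟩; exact tnorm_nonneg' _⟩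
    have hηle : η ≤ tnorm (lam l - lam k) := hη ▸ ciInf_le hbdd ⟨(l, k), hlk⟩
    have hηpos : 0 < η := by
      obtain ⟨p, hp⟩ := Finite.exists_min
        (fun p : {p : Fin K × Fin K // p.1 ≠ p.2} => tnorm (lam p.1.1 - lam p.1.2))
      have heq : η = tnorm (lam p.1.1 - lam p.1.2) :=
        le_antisymm (hη ▸ ciInf_le hbdd p) (hη ▸ le_ciInf hp)
      rw [heq]
      exact lt_of_le_of_ne (tnorm_nonneg' _) (Ne.symm (hsep _ _ p.2))
    have hCn : C / n ≤ η / 4 := by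
      rw [div_le_div_iff₀ hnpos (by norm_num)]
      have h4 : 4 * C ≤ (n : ℝ) * η := (div_le_iff₀ hηpos).mp hn4
      nlinarith
    have t1 : tnorm (lam l - lam k) ≤ tnorm (lam l - x) + tnorm (x - lam k) := tnorm_tri _ _ _
    have t2 : tnorm (x - lam k) ≤ tnorm (x - y) + tnorm (y - lam k) := tnorm_tri _ _ _
    have e1 : tnorm (lam l - x) = tnorm (x - lam l) := tnorm_symm _ _
    have hx2 := hx.2
    have hy2 := hy.2
    linarith

end
end

section
/- Assume S ≥ 2 and L > 0 are such that |Φ_n(x)| ≤ L / max(1, (n|x|)^S) for all x ∈ 𝕋 and n ≥ 1. Set m = min_{1≤k≤K} |A_k|, η = min_{k≠ℓ} |λ_k − λ_ℓ|, and C = max(1, (16ML/m)^{1/S}). Let n be an integer with n ≥ 4C/η, and assume max_{y∈𝕋} |E_n(y)| ≤ m/16. Define 𝔾 = {x ∈ 𝕋 : |σ_n(x)| ≥ m/2} and 𝔾_ℓ = {x ∈ 𝔾 : |x − λ_ℓ| < C/n}. Then for each ℓ = 1,…,K, the interval I_ℓ = {x ∈ 𝕋 : |x − λ_ℓ| ≤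 1/(4n)} satisfies I_ℓ ⊆ 𝔾_ℓ; in particular each 𝔾_ℓ is nonempty. -/
open MeasureTheory ProbabilityTheory

noncomputable section

namespace ProofAux

lemma zero_mem_lrange {n : ℕ} (hn : 1 ≤ n) : (0 : ℤ) ∈ lrange n := by
  simp only [lrange, Finset.mem_Ioo]
  omega

lemma W_nonneg (F : LowPassFilter) (n : ℕ) (ℓ : ℤ) : 0 ≤ F.toFun (|(ℓ : ℝ)| / n) :=
  (F.mem_Icc _).1

lemma sumW_ge_one (F : LowPassFilter) {n : ℕ} (hn : 1 ≤ n) :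
    1 ≤ ∑ ℓ ∈ lrange n, F.toFun (|(ℓ : ℝ)| / n) := by
  have h0 : F.toFun (|((0 : ℤ) : ℝ)| / n) = 1 := by
    apply F.eq_one
    simp
  calc (1 : ℝ) = F.toFun (|((0 : ℤ) : ℝ)| / n) := h0.symm
    _ ≤ ∑ ℓ ∈ lrange n, F.toFun (|(ℓ : ℝ)| / n) :=
      Finset.single_le_sum (fun ℓ _ => W_nonneg F n ℓ) (zero_mem_lrange hn)

lemma sumW_pos (F : LowPassFilter) {n : ℕ} (hn : 1 ≤ n) :
    0 < ∑ ℓ ∈ lrange n, F.toFun (|(ℓ : ℝ)| / n) :=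
  lt_of_lt_of_le one_pos (sumW_ge_one F hn)

lemma hbar_pos (F : LowPassFilter) {n : ℕ} (hn : 1 ≤ n) : 0 < hbar F n :=
  inv_pos.mpr (sumW_pos F hn)

lemma hbar_mul_sum (F : LowPassFilter) {n : ℕ} (hn : 1 ≤ n) :
    hbar F n * ∑ ℓ ∈ lrange n, F.toFun (|(ℓ : ℝ)| / n) = 1 :=
  inv_mul_cancel₀ (ne_of_gt (sumW_pos F hn))

lemma abs_int_lt {n : ℕ} {ℓ : ℤ} (hℓ : ℓ ∈ lrange n) : |(ℓ : ℝ)| ≤ n := by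
  simp only [lrange, Finset.mem_Ioo] at hℓ
  rw [abs_le]
  have h1 : -(n : ℤ) ≤ ℓ := le_of_lt hℓ.1
  have h2 : ℓ ≤ (n : ℤ) := le_of_lt hℓ.2
  constructor
  · exact_mod_cast h1
  · exact_mod_cast h2

lemma Phi_re_ge (F : LowPassFilter) {n : ℕ} (hn : 1 ≤ n) {y : ℝ}
    (hy : |y| ≤ 1 / (4 * n)) : 31 / 32 ≤ (Phi F n y).re := by
  have hn0 : (0 : ℝ) < n := by exact_mod_cast hn
  have hre : (Phi F n y).re
      = hbar F n * ∑ ℓ ∈ lrange n, F.toFun (|(ℓ : ℝ)| / n) * Real.cos (ℓ * y) := by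
    rw [Phi, Complex.re_ofReal_mul, Complex.re_sum]
    congr 1
    apply Finset.sum_congr rfl
    intro ℓ _
    have : Complex.I * (ℓ : ℂ) * (y : ℂ) = (((ℓ : ℝ) * y : ℝ) : ℂ) * Complex.I := by
      push_cast; ring
    rw [this, Complex.re_ofReal_mul, Complex.exp_ofReal_mul_I_re]
  rw [hre]
  have hcos : ∀ ℓ ∈ lrange n, (31 / 32 : ℝ) * F.toFun (|(ℓ : ℝ)| / n)
      ≤ F.toFun (|(ℓ : ℝ)| / n) * Real.cos (ℓ * y) := by
    intro ℓ hℓ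
    have habs : |(ℓ : ℝ) * y| ≤ 1 / 4 := by
      rw [abs_mul]
      calc |(ℓ : ℝ)| * |y| ≤ n * (1 / (4 * n)) :=
            mul_le_mul (abs_int_lt hℓ) hy (abs_nonneg _) (le_of_lt hn0)
        _ = 1 / 4 := by field_simp
    have hcos' : (31 / 32 : ℝ) ≤ Real.cos ((ℓ : ℝ) * y) := by
      have := Real.one_sub_sq_div_two_le_cos (x := (ℓ : ℝ) * y)
      have hsq : ((ℓ : ℝ) * y) ^ 2 ≤ (1 / 4) ^ 2 := by
        rw [← sq_abs]
        exact pow_le_pow_left₀ (abs_nonneg _) habs 2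
      nlinarith
    nlinarith [W_nonneg F n ℓ, (F.mem_Icc (|(ℓ : ℝ)| / n)).2]
  calc (31 / 32 : ℝ) = hbar F n * ((31 / 32) * ∑ ℓ ∈ lrange n, F.toFun (|(ℓ : ℝ)| / n)) := by
        rw [mul_comm (31 / 32 : ℝ), ← mul_assoc, hbar_mul_sum F hn, one_mul]
    _ ≤ _ := by
        apply mul_le_mul_of_nonneg_left _ (le_of_lt (hbar_pos F hn))
        rw [Finset.mul_sum]
        exact Finset.sum_le_sum hcos

end ProofAux
namespace ProofAux

lemma Phi_periodic (F : LowPassFilter) (n : ℕ) (y : ℝ) (j : ℤ) :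
    Phi F n (y + 2 * Real.pi * j) = Phi F n y := by
  unfold Phi
  congr 1
  apply Finset.sum_congr rfl
  intro ℓ _
  congr 1
  have : Complex.I * (ℓ : ℂ) * ((y + 2 * Real.pi * j : ℝ) : ℂ)
      = Complex.I * (ℓ : ℂ) * (y : ℂ) + ((ℓ * j : ℤ) : ℂ) * (2 * Real.pi * Complex.I) := by
    push_cast; ring
  rw [this, Complex.exp_add, Complex.exp_int_mul_two_pi_mul_I, mul_one]

lemma sigman_eq (F : LowPassFilter) (n : ℕ) {K : ℕ} (A : Fin K → ℂ) (lam : Fin K → ℝ)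
    (eps : ℤ → ℂ) (x : ℝ) :
    sigman F n A lam eps x = (∑ k, A k * Phi F n (x - lam k)) + En F n eps x := by
  unfold sigman En Phi muhat
  have : ∀ k : Fin K, A k * ((hbar F n : ℂ) *
      ∑ ℓ ∈ lrange n, (F.toFun (|(ℓ : ℝ)| / n) : ℂ) * Complex.exp (Complex.I * ℓ * ((x - lam k : ℝ) : ℂ)))
      = (hbar F n : ℂ) * ∑ ℓ ∈ lrange n,
          (F.toFun (|(ℓ : ℝ)| / n) : ℂ) * (A k * Complex.exp (-(Complex.I * ℓ * lam k)))
            * Complex.exp (Complex.I * ℓ * x) := by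
    intro k
    rw [Finset.mul_sum, Finset.mul_sum, Finset.mul_sum]
    apply Finset.sum_congr rfl
    intro ℓ _
    rw [show Complex.I * (ℓ : ℂ) * ((x - lam k : ℝ) : ℂ)
        = -(Complex.I * ℓ * (lam k : ℂ)) + Complex.I * ℓ * (x : ℂ) by push_cast; ring,
      Complex.exp_add]
    ring
  conv_rhs => rw [Finset.sum_congr rfl (fun k _ => this k)]
  rw [← Finset.mul_sum, ← mul_add, Finset.sum_comm, ← Finset.sum_add_distrib]
  congr 1
  apply Finset.sum_congr rfl
  intro ℓ _
  simp only [mul_add, add_mul, Finset.sum_mul, Finset.mul_sum]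


lemma tnorm_nonneg (x : ℝ) : 0 ≤ tnorm x := norm_nonneg _

lemma tnorm_neg (x : ℝ) : tnorm (-x) = tnorm x := by
  unfold tnorm
  rw [show ((-x : ℝ) : AddCircle (2 * Real.pi)) = -(x : AddCircle (2 * Real.pi)) from rfl,
    norm_neg]

lemma tnorm_add_le (a b : ℝ) : tnorm (a + b) ≤ tnorm a + tnorm b := by
  unfold tnorm
  rw [show ((a + b : ℝ) : AddCircle (2 * Real.pi))
    = (a : AddCircle (2 * Real.pi)) + (b : AddCircle (2 * Real.pi)) from rfl]
  exact norm_add_le _ _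

lemma tnorm_eq (x : ℝ) :
    tnorm x = |x - round ((2 * Real.pi)⁻¹ * x) * (2 * Real.pi)| := AddCircle.norm_eq _

end ProofAux
/-- Interval inclusion: `I_ℓ = {x : |x - λ_ℓ| ≤ 1/(4n)} ⊆ 𝔾_ℓ`; in particular each `𝔾_ℓ` is
nonempty. -/
theorem interval_inclusion (F : LowPassFilter) (S L : ℝ) (hS : 2 ≤ S) (hL : 0 < L)
    (hloc : ∀ ν : ℕ, 1 ≤ ν → ∀ y : ℝ,
      ‖Phi F ν y‖ ≤ L / max 1 (((ν : ℝ) * tnorm y) ^ S))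
    (K : ℕ) (hK : 1 ≤ K) (lam : Fin K → ℝ) (A : Fin K → ℂ)
    (hsep : ∀ k l : Fin K, k ≠ l → tnorm (lam k - lam l) ≠ 0) (hA : ∀ k, A k ≠ 0)
    (M : ℝ) (hM : M = ∑ k, ‖A k‖)
    (m : ℝ) (hm : m = ⨅ k : Fin K, ‖A k‖)
    (η : ℝ) (hη : η = ⨅ p : { p : Fin K × Fin K // p.1 ≠ p.2 }, tnorm (lam p.1.1 - lam p.1.2))
    (C : ℝ) (hC : C = max 1 ((16 * M * L / m) ^ (1 / S)))
    (n : ℕ) (hn : 1 ≤ n) (hn4 : 4 * C / η ≤ (n : ℝ)) (eps : ℤ → ℂ)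
    (hE : ∀ y : ℝ, ‖En F n eps y‖ ≤ m / 16) :
    ∀ l : Fin K,
      (∀ x : ℝ, tnorm (x - lam l) ≤ 1 / (4 * n) → x ∈ Glset F n A lam eps m C l) ∧
      (Glset F n A lam eps m C l).Nonempty := by
  intro l
  haveI : NeZero K := ⟨by omega⟩
  have habsA_pos : ∀ k, 0 < ‖A k‖ := fun k => norm_pos_iff.mpr (hA k)
  have hbdd : BddBelow (Set.range fun k : Fin K => ‖A k‖) :=
    (Set.finite_range _).bddBelow
  have hm_le : ∀ k, m ≤ ‖A k‖ := fun k => hm ▸ ciInf_le hbdd k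
  have hm0 : 0 < m := by
    obtain ⟨k₀, hk₀⟩ := Finite.exists_min fun k : Fin K => ‖A k‖
    have h2 : ‖A k₀‖ ≤ m := hm ▸ le_ciInf hk₀
    exact lt_of_lt_of_le (habsA_pos k₀) h2
  have hn0 : (0:ℝ) < n := by exact_mod_cast hn
  have hM0 : 0 ≤ M := hM ▸ Finset.sum_nonneg fun k _ => norm_nonneg _
  set a := 16 * M * L / m with ha
  have ha0 : 0 ≤ a := by positivity
  have hC1 : 1 ≤ C := hC ▸ le_max_left _ _
  have hC0 : 0 < C := lt_of_lt_of_le one_pos hC1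
  have hS0 : 0 < S := by linarith
  have hCS : max 1 a ≤ C ^ S := by
    rw [max_le_iff]
    constructor
    · calc (1:ℝ) = 1 ^ S := (Real.one_rpow S).symm
        _ ≤ C ^ S := Real.rpow_le_rpow zero_le_one hC1 (le_of_lt hS0)
    · have haa : a = (a ^ (1/S)) ^ S := by
        rw [← Real.rpow_mul ha0, one_div_mul_cancel (ne_of_gt hS0), Real.rpow_one]
      calc a = (a ^ (1/S)) ^ S := haa
        _ ≤ C ^ S := Real.rpow_le_rpow (Real.rpow_nonneg ha0 _)
            (hC ▸ le_max_right _ _) (le_of_lt hS0)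
  have h2CS : 4 * max 1 a ≤ (2 * C) ^ S := by
    rw [Real.mul_rpow (by norm_num) (le_of_lt hC0)]
    have h4 : (4:ℝ) ≤ 2 ^ S := by
      calc (4:ℝ) = 2 ^ (2:ℝ) := by
            rw [show (2:ℝ) = ((2:ℕ):ℝ) by norm_num, Real.rpow_natCast]; norm_num
        _ ≤ 2 ^ S := Real.rpow_le_rpow_of_exponent_le one_le_two hS
    calc 4 * max 1 a ≤ 2 ^ S * C ^ S :=
          mul_le_mul h4 hCS (le_trans zero_le_one (le_max_left _ _))
            (Real.rpow_nonneg (by norm_num) _)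
      _ = _ := by rfl
  have hPhi_lower : ∀ x : ℝ, tnorm (x - lam l) ≤ 1/(4*n) →
      31/32 ≤ ‖Phi F n (x - lam l)‖ := by
    intro x hx
    set z := x - lam l with hz
    set j := round ((2*Real.pi)⁻¹ * z) with hj
    set y := z - (j:ℝ) * (2*Real.pi) with hy
    have htn : tnorm z = |y| := ProofAux.tnorm_eq z
    have hyabs : |y| ≤ 1/(4*n) := htn ▸ hx
    have hper : Phi F n z = Phi F n y := by
      rw [show z = y + 2*Real.pi*(j:ℝ) by rw [hy]; ring]
      exact ProofAux.Phi_periodic F n y j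
    rw [hper]
    exact le_trans (ProofAux.Phi_re_ge F hn hyabs) (Complex.re_le_norm _)
  have htail : ∀ k : Fin K, k ≠ l → ∀ x : ℝ, tnorm (x - lam l) ≤ 1/(4*n) →
      ‖Phi F n (x - lam k)‖ ≤ L / (4 * max 1 a) := by
    intro k hkl x hx
    haveI hne : Nonempty {p : Fin K × Fin K // p.1 ≠ p.2} := ⟨⟨(l, k), Ne.symm hkl⟩⟩
    have hη_le : η ≤ tnorm (lam l - lam k) := by
      rw [hη]
      exact ciInf_le ((Set.finite_range _).bddBelow)
        (⟨(l,k), Ne.symm hkl⟩ : {p : Fin K × Fin K // p.1 ≠ p.2})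
    have hη0 : 0 < η := by
      obtain ⟨p₀, hp₀⟩ := Finite.exists_min
        fun p : {p : Fin K × Fin K // p.1 ≠ p.2} => tnorm (lam p.1.1 - lam p.1.2)
      have h1 : tnorm (lam p₀.1.1 - lam p₀.1.2) ≤ η := hη ▸ le_ciInf hp₀
      have h2 : 0 < tnorm (lam p₀.1.1 - lam p₀.1.2) :=
        lt_of_le_of_ne (ProofAux.tnorm_nonneg _) (Ne.symm (hsep _ _ p₀.2))
      linarith
    have h4C : 4 * C ≤ (n:ℝ) * η := by
      have := (div_le_iff₀ hη0).mp hn4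
      linarith
    have htri : η - 1/(4*n) ≤ tnorm (x - lam k) := by
      have h1 : tnorm (lam l - lam k) ≤ tnorm (lam l - x) + tnorm (x - lam k) := by
        rw [show lam l - lam k = (lam l - x) + (x - lam k) by ring]
        exact ProofAux.tnorm_add_le _ _
      have h2 : tnorm (lam l - x) = tnorm (x - lam l) := by
        rw [show lam l - x = -(x - lam l) by ring, ProofAux.tnorm_neg]
      linarith
    have hnt : 2 * C ≤ (n:ℝ) * tnorm (x - lam k) := by
      have hmul : (n:ℝ) * (η - 1/(4*n)) ≤ (n:ℝ) * tnorm (x - lam k) :=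
        mul_le_mul_of_nonneg_left htri (le_of_lt hn0)
      have heq : (n:ℝ) * (η - 1/(4*n)) = (n:ℝ)*η - 1/4 := by field_simp
      linarith
    have hrp : (2*C)^S ≤ ((n:ℝ) * tnorm (x - lam k))^S :=
      Real.rpow_le_rpow (by positivity) hnt (le_of_lt hS0)
    have hmax : 4 * max 1 a ≤ max 1 (((n:ℝ) * tnorm (x - lam k))^S) :=
      le_trans (le_trans h2CS hrp) (le_max_right _ _)
    have hpos : (0:ℝ) < 4 * max 1 a := by
      have := le_max_left (1:ℝ) a; linarith
    calc ‖Phi F n (x - lam k)‖ ≤ L / max 1 (((n:ℝ)*tnorm (x - lam k))^S) :=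
          hloc n hn _
      _ ≤ L / (4 * max 1 a) := by gcongr
  have hmem : ∀ x : ℝ, tnorm (x - lam l) ≤ 1 / (4 * n) → x ∈ Glset F n A lam eps m C l := by
    intro x hx
    simp only [Glset, Gset, Set.mem_setOf_eq]
    refine ⟨?_, lt_of_le_of_lt hx ?_⟩
    · show m/2 ≤ ‖sigman F n A lam eps x‖
      rw [ProofAux.sigman_eq, ← Finset.sum_erase_add _ _ (Finset.mem_univ l)]
      set T := ∑ k ∈ Finset.univ.erase l, A k * Phi F n (x - lam k) with hT
      set u := A l * Phi F n (x - lam l) with hu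
      set E := En F n eps x with hEdef
      have hT_le : ‖T‖ ≤ m/64 := by
        calc ‖T‖ ≤ ∑ k ∈ Finset.univ.erase l,
              ‖A k * Phi F n (x - lam k)‖ := norm_sum_le _ _
          _ ≤ ∑ k ∈ Finset.univ.erase l, ‖A k‖ * (L/(4*max 1 a)) := by
              apply Finset.sum_le_sum
              intro k hk
              rw [norm_mul]
              exact mul_le_mul_of_nonneg_left
                (htail k (Finset.ne_of_mem_erase hk) x hx) (norm_nonneg _)
          _ = (∑ k ∈ Finset.univ.erase l, ‖A k‖) * (L/(4*max 1 a)) :=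
              (Finset.sum_mul _ _ _).symm
          _ ≤ M * (L/(4*max 1 a)) := by
              apply mul_le_mul_of_nonneg_right _ (by positivity)
              rw [hM]
              exact Finset.sum_le_sum_of_subset_of_nonneg (Finset.subset_univ _)
                (fun k _ _ => norm_nonneg _)
          _ ≤ m/64 := by
              have hmax1 : (1:ℝ) ≤ max 1 a := le_max_left _ _
              have hma : m * a = 16*M*L := by
                rw [ha]; field_simp
              have hma2 : 16*M*L ≤ m * max 1 a := by
                nlinarith [le_max_right (1:ℝ) a, hm0]
              rw [← mul_div_assoc, div_le_div_iff₀ (by positivity) (by norm_num)]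
              nlinarith
      have hmain : m * (31/32) ≤ ‖u‖ := by
        rw [hu, norm_mul]
        exact mul_le_mul (hm_le l) (hPhi_lower x hx) (by norm_num) (norm_nonneg _)
      have htri2 : ‖u‖ ≤ ‖T + u + E‖
          + (‖T‖ + ‖E‖) := by
        calc ‖u‖ = ‖(T + u + E) + (-T + -E)‖ := by
              rw [show (T + u + E) + (-T + -E) = u by ring]
          _ ≤ ‖T + u + E‖ + ‖-T + -E‖ := norm_add_le _ _
          _ ≤ ‖T + u + E‖ + (‖T‖ + ‖E‖) := by
              have h3 : ‖-T + -E‖ ≤ ‖-T‖ + ‖-E‖ :=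
                norm_add_le _ _
              rw [norm_neg, norm_neg] at h3
              linarith
      have hEx : ‖E‖ ≤ m/16 := hE x
      linarith
    · rw [div_lt_div_iff₀ (by positivity) hn0]
      nlinarith
  refine ⟨hmem, ⟨lam l, hmem (lam l) ?_⟩⟩
  have h0 : tnorm (lam l - lam l) = 0 := by
    simp [tnorm]
  rw [h0]
  positivity

end
end
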